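/- arXiv:1010.5223 — 2 statements merged into one kernel-verified Lean document; each statement's English description precedes it below -/
import Mathlib

section
/- Let a, b, τ > 0 with |1 − 1/τ²| < 1, s ∈ ℝ, σ > 0, and y ∈ ℝ; set a' = a + 1/2 and s' = s + y²/(2σ²). If κ is distributed with the hypergeometric-beta density π_{a',b,τ,s'}, then for every positive integer n, E[κⁿ] = ∫₀¹ κⁿ π_{a',b,τ,s'}(κ) dκ = [(a')_n / (a'+b)_n] · Φ₁(b, 1; a'+b+n; s', 1−1/τ²) / Φ₁(b, 1; a'+b; s', 1−1/τ²). -/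
open MeasureTheory Set

/-- The unnormalized hypergeometric-beta kernel
`κ^{a−1} (1−κ)^{b−1} {1/τ² + (1 − 1/τ²)κ}^{−1} e^{−sκ}`. -/
noncomputable def hbKer (a b τ s κ : ℝ) : ℝ :=
  κ ^ (a - 1) * (1 - κ) ^ (b - 1) * (1 / τ ^ 2 + (1 - 1 / τ ^ 2) * κ)⁻¹ *
    Real.exp (-(s * κ))

/-- The normalizing constant `C(a,b,τ,s)`. -/
noncomputable def hbC (a b τ s : ℝ) : ℝ :=
  ∫ κ in Set.Ioo (0 : ℝ) 1, hbKer a b τ s κ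

/-- The hypergeometric-beta density `π_{a,b,τ,s}` on `(0,1)`. -/
noncomputable def hbPdf (a b τ s κ : ℝ) : ℝ :=
  (hbC a b τ s)⁻¹ * hbKer a b τ s κ

/-- The rising factorial `(q)_k = q (q+1) ⋯ (q+k−1)`. -/
noncomputable def risingFac (q : ℝ) (k : ℕ) : ℝ :=
  ∏ i ∈ Finset.range k, (q + (i : ℝ))

/-- The degenerate (Humbert) hypergeometric function of two variables
`Φ₁(α, β; γ; x, y) = Σ_{m,n≥0} [(α)_{m+n} (β)_n / ((γ)_{m+n} m! n!)] x^m y^n`. -/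
noncomputable def Phi1 (α β γ x y : ℝ) : ℝ :=
  ∑' p : ℕ × ℕ,
    risingFac α (p.1 + p.2) * risingFac β p.2 /
      (risingFac γ (p.1 + p.2) * (Nat.factorial p.1) * (Nat.factorial p.2)) *
      x ^ p.1 * y ^ p.2

/-- The Euler beta function `B(a,b) = Γ(a)Γ(b)/Γ(a+b)`. -/
noncomputable def betaFn (a b : ℝ) : ℝ :=
  Real.Gamma a * Real.Gamma b / Real.Gamma (a + b)

/-!
Substituting `κ ↦ 1 - κ` turns `C(A, b, τ, s)` into
`e^{-s} ∫₀¹ u^{b-1} (1-u)^{A-1} e^{su} (1 - yu)⁻¹ du` with `y = 1 - 1/τ²`. For `|y| < 1`,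
expanding `e^{su} (1 - yu)⁻¹` as a double power series and integrating term by term against
Beta kernels gives `C(A, b, τ, s) = e^{-s} B(b, A) Φ₁(b, 1; A + b; s, y)`.
Multiplying the kernel by `κⁿ` shifts `A` to `A + n`, so the `n`-th moment is
`C(A + n, b, τ, s) / C(A, b, τ, s)`, and `B(b, A + n) / B(b, A) = (A)ₙ / (A + b)ₙ`.
-/

lemma risingFac_pos {q : ℝ} (hq : 0 < q) (n : ℕ) : 0 < risingFac q n :=
  Finset.prod_pos fun _ _ => by positivity

lemma risingFac_le_risingFac {q r : ℝ} (hq : 0 < q) (hqr : q ≤ r) (n : ℕ) :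
    risingFac q n ≤ risingFac r n :=
  Finset.prod_le_prod (fun _ _ => by positivity) fun _ _ => by linarith

lemma risingFac_one (n : ℕ) : risingFac 1 n = n.factorial := by
  rw [risingFac, ← Finset.prod_range_add_one_eq_factorial]
  push_cast
  simp only [add_comm]

lemma Gamma_add_nat_eq_mul_risingFac {q : ℝ} (hq : 0 < q) (n : ℕ) :
    Real.Gamma (q + n) = Real.Gamma q * risingFac q n := by
  induction n with
  | zero => simp [risingFac]
  | succ k ih =>
    rw [Nat.cast_succ, ← add_assoc, Real.Gamma_add_one (by positivity), ih]
    simp only [risingFac, Finset.prod_range_succ]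
    ring

lemma betaFn_pos {a b : ℝ} (ha : 0 < a) (hb : 0 < b) : 0 < betaFn a b := by
  unfold betaFn
  have := Real.Gamma_pos_of_pos ha
  have := Real.Gamma_pos_of_pos hb
  have := Real.Gamma_pos_of_pos (add_pos ha hb)
  positivity

lemma betaFn_comm (a b : ℝ) : betaFn a b = betaFn b a := by
  rw [betaFn, betaFn, add_comm, mul_comm]

lemma betaFn_add_nat {a b : ℝ} (ha : 0 < a) (hb : 0 < b) (n : ℕ) :
    betaFn b (a + n) = betaFn b a * (risingFac a n / risingFac (a + b) n) := by
  have hΓ := (Real.Gamma_pos_of_pos (add_pos ha hb)).ne'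
  have hr := (risingFac_pos (add_pos ha hb) n).ne'
  rw [betaFn, betaFn, show b + (a + n) = (a + b) + n by ring, add_comm b a,
    Gamma_add_nat_eq_mul_risingFac ha, Gamma_add_nat_eq_mul_risingFac (add_pos ha hb)]
  field_simp

lemma betaFn_add_nat_le {A b : ℝ} (hA : 0 < A) (hb : 0 < b) (n : ℕ) :
    betaFn (b + n) A ≤ betaFn b A := by
  rw [betaFn_comm, betaFn_add_nat hb hA, betaFn_comm A b]
  have hr := risingFac_pos (add_pos hb hA) n
  refine mul_le_of_le_one_right (betaFn_pos hb hA).le ?_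
  exact (div_le_one hr).2 (risingFac_le_risingFac hb (le_add_of_nonneg_right hA.le) n)

lemma integrableOn_rpow_mul_one_sub_rpow {c A : ℝ} (hc : 0 < c) (hA : 0 < A) :
    IntegrableOn (fun u : ℝ => u ^ (c - 1) * (1 - u) ^ (A - 1)) (Ioo 0 1) := by
  have h := Complex.betaIntegral_convergent (u := (c : ℂ)) (v := (A : ℂ))
    (by simpa using hc) (by simpa using hA)
  rw [intervalIntegrable_iff_integrableOn_Ioc_of_le zero_le_one] at h
  refine IntegrableOn.congr_fun (h.mono_set Ioo_subset_Ioc_self).norm (fun u ⟨hu0, hu1⟩ => ?_)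
    measurableSet_Ioo
  rw [norm_mul, Complex.norm_cpow_eq_rpow_re_of_pos hu0,
    show 1 - (u : ℂ) = ((1 - u : ℝ) : ℂ) by push_cast; ring,
    Complex.norm_cpow_eq_rpow_re_of_pos (by linarith)]
  simp

lemma integral_rpow_mul_one_sub_rpow {c A : ℝ} (hc : 0 < c) (hA : 0 < A) :
    ∫ u in Ioo (0 : ℝ) 1, u ^ (c - 1) * (1 - u) ^ (A - 1) = betaFn c A := by
  have hI : Complex.betaIntegral c A =
      ↑(∫ u in Ioo (0 : ℝ) 1, u ^ (c - 1) * (1 - u) ^ (A - 1)) := by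
    rw [Complex.betaIntegral, intervalIntegral.integral_of_le zero_le_one,
      integral_Ioc_eq_integral_Ioo, ← integral_complex_ofReal]
    refine setIntegral_congr_fun measurableSet_Ioo fun u ⟨hu0, hu1⟩ => ?_
    rw [Complex.ofReal_mul, Complex.ofReal_cpow hu0.le,
      Complex.ofReal_cpow (by linarith : (0 : ℝ) ≤ 1 - u)]
    push_cast
    ring
  have hG := Complex.Gamma_mul_Gamma_eq_betaIntegral (s := c) (t := A)
    (by simpa using hc) (by simpa using hA)
  rw [hI, ← Complex.ofReal_add, Complex.Gamma_ofReal, Complex.Gamma_ofReal,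
    Complex.Gamma_ofReal] at hG
  norm_cast at hG
  rw [betaFn, hG, mul_div_cancel_left₀ _ (Real.Gamma_pos_of_pos (add_pos hc hA)).ne']

/-- The `(m, n)` term of the expansion of `u^(b-1) (1-u)^(A-1) e^{xu} (1-yu)⁻¹` in powers of
`xu` and `yu`. -/
noncomputable def phi1Term (A b x y : ℝ) (p : ℕ × ℕ) (u : ℝ) : ℝ :=
  x ^ p.1 / p.1.factorial * y ^ p.2 * (u ^ (b + ((p.1 + p.2 : ℕ) : ℝ) - 1) * (1 - u) ^ (A - 1))

section Phi1Integral

variable {A b x y : ℝ}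

lemma abs_phi1Term {u : ℝ} (hu : u ∈ Ioo (0 : ℝ) 1) (p : ℕ × ℕ) :
    |phi1Term A b x y p u| = phi1Term A b |x| |y| p u := by
  have := Real.rpow_nonneg hu.1.le (b + ((p.1 + p.2 : ℕ) : ℝ) - 1)
  have := Real.rpow_nonneg (sub_nonneg.2 hu.2.le) (A - 1)
  simp only [phi1Term, abs_mul, abs_div, abs_pow, Nat.abs_cast, abs_of_nonneg (by positivity :
    0 ≤ u ^ (b + ((p.1 + p.2 : ℕ) : ℝ) - 1) * (1 - u) ^ (A - 1))]

lemma integral_phi1Term (hA : 0 < A) (hb : 0 < b) (p : ℕ × ℕ) :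
    ∫ u in Ioo (0 : ℝ) 1, phi1Term A b x y p u =
      x ^ p.1 / p.1.factorial * y ^ p.2 * betaFn (b + ((p.1 + p.2 : ℕ) : ℝ)) A := by
  rw [← integral_rpow_mul_one_sub_rpow (by positivity) hA, ← integral_const_mul]
  rfl

lemma integrableOn_phi1Term (hA : 0 < A) (hb : 0 < b) (p : ℕ × ℕ) :
    IntegrableOn (phi1Term A b x y p) (Ioo 0 1) :=
  (integrableOn_rpow_mul_one_sub_rpow (by positivity) hA).const_mul _

lemma summable_integral_norm_phi1Term (hA : 0 < A) (hb : 0 < b) (hy : |y| < 1) :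
    Summable fun p => ∫ u in Ioo (0 : ℝ) 1, ‖phi1Term A b x y p u‖ := by
  have hexp : Summable fun m : ℕ => ‖|x| ^ m / m.factorial‖ := by
    simpa [abs_div] using Real.summable_pow_div_factorial |x|
  have hgeom : Summable fun n : ℕ => ‖|y| ^ n‖ := by
    simpa using summable_geometric_of_lt_one (abs_nonneg y) hy
  refine Summable.of_nonneg_of_le (fun p => integral_nonneg fun u => norm_nonneg _) (fun p => ?_)
    ((summable_mul_of_summable_norm hexp hgeom).mul_right (betaFn b A))
  rw [setIntegral_congr_fun measurableSet_Ioo fun u hu => by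
    rw [Real.norm_eq_abs, abs_phi1Term hu p], integral_phi1Term hA hb]
  exact mul_le_mul_of_nonneg_left (betaFn_add_nat_le hA hb _) (by positivity)

lemma tsum_phi1Term {u : ℝ} (hu : u ∈ Ioo (0 : ℝ) 1) (hy : |y| < 1) :
    ∑' p, phi1Term A b x y p u =
      u ^ (b - 1) * (1 - u) ^ (A - 1) * (1 - y * u)⁻¹ * Real.exp (x * u) := by
  have hyu : ‖y * u‖ < 1 := by
    rw [Real.norm_eq_abs, abs_mul, abs_of_pos hu.1]
    nlinarith [abs_nonneg y, hu.2]
  have hexp : Summable fun m : ℕ => ‖(x * u) ^ m / m.factorial‖ := by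
    simpa [abs_div] using Real.summable_pow_div_factorial |x * u|
  have hgeom : Summable fun n : ℕ => ‖(y * u) ^ n‖ := by
    simpa [norm_pow] using summable_geometric_of_lt_one (norm_nonneg _) hyu
  have hterm : ∀ p : ℕ × ℕ, phi1Term A b x y p u =
      u ^ (b - 1) * (1 - u) ^ (A - 1) * ((x * u) ^ p.1 / p.1.factorial * (y * u) ^ p.2) := by
    intro p
    rw [phi1Term, Real.rpow_sub hu.1, Real.rpow_add hu.1, Real.rpow_natCast, Real.rpow_sub hu.1,
      Real.rpow_one]
    ring
  rw [tsum_congr hterm, tsum_mul_left, ← tsum_mul_tsum_of_summable_norm hexp hgeom,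
    tsum_geometric_of_norm_lt_one hyu, Real.exp_eq_exp_ℝ, NormedSpace.exp_eq_tsum_div]
  ring

lemma integral_eq_betaFn_mul_Phi1 (hA : 0 < A) (hb : 0 < b) (hy : |y| < 1) :
    ∫ u in Ioo (0 : ℝ) 1,
        u ^ (b - 1) * (1 - u) ^ (A - 1) * (1 - y * u)⁻¹ * Real.exp (x * u) =
      betaFn b A * Phi1 b 1 (A + b) x y := by
  have hcoeff : ∀ p : ℕ × ℕ,
      x ^ p.1 / p.1.factorial * y ^ p.2 * betaFn (b + ((p.1 + p.2 : ℕ) : ℝ)) A =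
        betaFn b A * (risingFac b (p.1 + p.2) * risingFac 1 p.2 /
          (risingFac (A + b) (p.1 + p.2) * p.1.factorial * p.2.factorial) * x ^ p.1 * y ^ p.2) := by
    intro p
    have := (risingFac_pos (add_pos hA hb) (p.1 + p.2)).ne'
    rw [betaFn_comm, betaFn_add_nat hb hA, betaFn_comm A b, add_comm b A, risingFac_one]
    field_simp
  calc _ = ∫ u in Ioo (0 : ℝ) 1, ∑' p, phi1Term A b x y p u :=
        setIntegral_congr_fun measurableSet_Ioo fun u hu => (tsum_phi1Term hu hy).symm
    _ = ∑' p, ∫ u in Ioo (0 : ℝ) 1, phi1Term A b x y p u :=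
        (integral_tsum_of_summable_integral_norm (integrableOn_phi1Term hA hb)
          (summable_integral_norm_phi1Term hA hb hy)).symm
    _ = betaFn b A * Phi1 b 1 (A + b) x y := by
        simp only [integral_phi1Term hA hb, hcoeff, Phi1, tsum_mul_left]

end Phi1Integral

lemma hbKer_one_sub (A b τ s u : ℝ) :
    hbKer A b τ s (1 - u) = Real.exp (-s) *
      (u ^ (b - 1) * (1 - u) ^ (A - 1) * (1 - (1 - 1 / τ ^ 2) * u)⁻¹ * Real.exp (s * u)) := by
  rw [hbKer, sub_sub_cancel,
    show 1 / τ ^ 2 + (1 - 1 / τ ^ 2) * (1 - u) = 1 - (1 - 1 / τ ^ 2) * u by ring,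
    show -(s * (1 - u)) = -s + s * u by ring, Real.exp_add]
  ring

lemma hbC_eq_exp_mul_betaFn_mul_Phi1 {A b τ : ℝ} (s : ℝ) (hA : 0 < A) (hb : 0 < b)
    (hτ : |1 - 1 / τ ^ 2| < 1) :
    hbC A b τ s = Real.exp (-s) * betaFn b A * Phi1 b 1 (A + b) s (1 - 1 / τ ^ 2) := by
  have hreflect := intervalIntegral.integral_comp_sub_left (hbKer A b τ s) (a := 0) (b := 1) 1
  rw [sub_self, sub_zero, intervalIntegral.integral_of_le zero_le_one,
    intervalIntegral.integral_of_le zero_le_one, integral_Ioc_eq_integral_Ioo,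
    integral_Ioc_eq_integral_Ioo] at hreflect
  rw [hbC, ← hreflect]
  simp only [hbKer_one_sub]
  rw [integral_const_mul, integral_eq_betaFn_mul_Phi1 hA hb hτ, mul_assoc]

lemma pow_mul_hbKer {A b τ s κ : ℝ} (hκ : 0 < κ) (n : ℕ) :
    κ ^ n * hbKer A b τ s κ = hbKer (A + n) b τ s κ := by
  rw [hbKer, hbKer, add_sub_right_comm, Real.rpow_add hκ, Real.rpow_natCast]
  ring

lemma integral_pow_mul_hbPdf (A b τ s : ℝ) (n : ℕ) :
    ∫ κ in Ioo (0 : ℝ) 1, κ ^ n * hbPdf A b τ s κ = hbC (A + n) b τ s / hbC A b τ s := by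
  simp only [hbPdf, mul_left_comm _ (hbC A b τ s)⁻¹]
  rw [integral_const_mul, hbC,
    setIntegral_congr_fun measurableSet_Ioo fun κ hκ => pow_mul_hbKer hκ.1 n, inv_mul_eq_div]
  rfl

lemma integral_pow_mul_hbPdf_eq_Phi1_ratio {A b τ : ℝ} (s : ℝ) (hA : 0 < A) (hb : 0 < b)
    (hτ : |1 - 1 / τ ^ 2| < 1) (n : ℕ) :
    ∫ κ in Ioo (0 : ℝ) 1, κ ^ n * hbPdf A b τ s κ =
      risingFac A n / risingFac (A + b) n *
        (Phi1 b 1 (A + b + n) s (1 - 1 / τ ^ 2) / Phi1 b 1 (A + b) s (1 - 1 / τ ^ 2)) := by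
  have hB := (betaFn_pos hb hA).ne'
  have hr := (risingFac_pos (add_pos hA hb) n).ne'
  rw [integral_pow_mul_hbPdf, hbC_eq_exp_mul_betaFn_mul_Phi1 s (by positivity) hb hτ,
    hbC_eq_exp_mul_betaFn_mul_Phi1 s hA hb hτ,
    betaFn_add_nat hA hb, add_right_comm A]
  field_simp

theorem hb_posterior_moments_general (a b τ s σ y : ℝ) (ha : 0 < a) (hb : 0 < b)
    (hτ' : |1 - 1 / τ ^ 2| < 1) (n : ℕ) :
    ∫ κ in Set.Ioo (0 : ℝ) 1,
        (κ : ℝ) ^ n * hbPdf (a + 1 / 2) b τ (s + y ^ 2 / (2 * σ ^ 2)) κ =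
      risingFac (a + 1 / 2) n / risingFac (a + 1 / 2 + b) n *
        (Phi1 b 1 (a + 1 / 2 + b + n) (s + y ^ 2 / (2 * σ ^ 2)) (1 - 1 / τ ^ 2) /
          Phi1 b 1 (a + 1 / 2 + b) (s + y ^ 2 / (2 * σ ^ 2)) (1 - 1 / τ ^ 2)) :=
  integral_pow_mul_hbPdf_eq_Phi1_ratio _ (by linarith) hb hτ' n

theorem hb_posterior_moments (a b τ s σ y : ℝ) (ha : 0 < a) (hb : 0 < b) (hτ : 0 < τ)
    (hτ' : |1 - 1 / τ ^ 2| < 1) (hσ : 0 < σ) (n : ℕ) (hn : 0 < n) :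
    ∫ κ in Set.Ioo (0 : ℝ) 1,
        (κ : ℝ) ^ n * hbPdf (a + 1 / 2) b τ (s + y ^ 2 / (2 * σ ^ 2)) κ =
      risingFac (a + 1 / 2) n / risingFac (a + 1 / 2 + b) n *
        (Phi1 b 1 (a + 1 / 2 + b + n) (s + y ^ 2 / (2 * σ ^ 2)) (1 - 1 / τ ^ 2) /
          Phi1 b 1 (a + 1 / 2 + b) (s + y ^ 2 / (2 * σ ^ 2)) (1 - 1 / τ ^ 2)) :=
  hb_posterior_moments_general a b τ s σ y ha hb hτ' n
end

section
/- Let a, b, τ > 0, s ∈ ℝ, σ > 0, and y ∈ ℝ. Suppose y given κ has density N(y; 0, σ²/κ) and κ has prior density π_{a,b,τ,s}. Then the posterior of κ given y is again hypergeometric-beta with updated parameters: for every κ ∈ (0,1), N(y; 0, σ²/κ) π_{a,b,τ,s}(κ) / [∫₀¹ N(y; 0, σ²/u) π_{a,b,τ,s}(u) du] = π_{a+1/2, b, τ, s + y²/(2σ²)}(κ). -/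
open MeasureTheory Set

/-- The normal density with mean `μ` and variance `v`. -/
noncomputable def normPdf (y μ v : ℝ) : ℝ :=
  (2 * Real.pi * v) ^ (-(1 : ℝ) / 2) * Real.exp (-((y - μ) ^ 2) / (2 * v))

/-! The likelihood `N(y; 0, σ²/κ) = (2πσ²)^{-1/2} κ^{1/2} e^{-y²κ/(2σ²)}` turns the kernel of
`HB(a, b, τ, s)` into `(2πσ²)^{-1/2}` times the kernel of `HB(a + 1/2, b, τ, s + y²/(2σ²))`.
Bayes' quotient does not see nonzero constant factors, and the only other one in play is
`C(a, b, τ, s)`, which is positive: on `(0, 1)` the kernel is positive and dominated by a multiple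
of the integrable beta kernel `κ^{a-1} (1-κ)^{b-1}`. -/

lemma integrableOn_rpow_mul_one_sub_rpow_s9 {a b : ℝ} (ha : 0 < a) (hb : 0 < b) :
    IntegrableOn (fun x : ℝ => x ^ (a - 1) * (1 - x) ^ (b - 1)) (Ioo 0 1) := by
  have hβ := Complex.betaIntegral_convergent (u := a) (v := b) (by simpa) (by simpa)
  rw [intervalIntegrable_iff_integrableOn_Ioc_of_le zero_le_one] at hβ
  refine (IntegrableOn.mono_set hβ.norm Ioo_subset_Ioc_self).congr_fun (fun x hx => ?_)
    measurableSet_Ioo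
  have h1x : (1 : ℂ) - x = ((1 - x : ℝ) : ℂ) := by push_cast; ring
  dsimp only
  rw [norm_mul, h1x, Complex.norm_cpow_eq_rpow_re_of_pos hx.1,
    Complex.norm_cpow_eq_rpow_re_of_pos (sub_pos.2 hx.2)]
  norm_num

lemma inv_sq_add_one_sub_inv_sq_mul_pos {τ κ : ℝ} (hτ : τ ≠ 0) (hκ : κ ∈ Icc (0 : ℝ) 1) :
    0 < 1 / τ ^ 2 + (1 - 1 / τ ^ 2) * κ := by
  have hτ2 : 0 < 1 / τ ^ 2 := by positivity
  rw [show 1 / τ ^ 2 + (1 - 1 / τ ^ 2) * κ = (1 - κ) * (1 / τ ^ 2) + κ by ring]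
  rcases hκ.1.eq_or_lt with rfl | hκ0
  · simpa using hτ2
  · nlinarith [mul_nonneg (sub_nonneg.2 hκ.2) hτ2.le]

lemma hbKer_pos (a b s : ℝ) {τ κ : ℝ} (hτ : τ ≠ 0) (hκ : κ ∈ Ioo (0 : ℝ) 1) :
    0 < hbKer a b τ s κ := by
  have hκ0 : 0 < κ := hκ.1
  have h1κ : 0 < 1 - κ := sub_pos.2 hκ.2
  have hden := inv_sq_add_one_sub_inv_sq_mul_pos hτ (Ioo_subset_Icc_self hκ)
  unfold hbKer
  positivity

lemma integrableOn_hbKer {a b : ℝ} (s : ℝ) {τ : ℝ} (ha : 0 < a) (hb : 0 < b) (hτ : τ ≠ 0) :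
    IntegrableOn (hbKer a b τ s) (Ioo 0 1) := by
  have hcont : ContinuousOn (fun κ : ℝ => (1 / τ ^ 2 + (1 - 1 / τ ^ 2) * κ)⁻¹ *
      Real.exp (-(s * κ))) (Icc 0 1) :=
    (ContinuousOn.inv₀ (by fun_prop)
      fun κ hκ => (inv_sq_add_one_sub_inv_sq_mul_pos hτ hκ).ne').mul (by fun_prop)
  refine ((integrableOn_rpow_mul_one_sub_rpow_s9 ha hb).mul_continuousOn_of_subset hcont
    measurableSet_Ioo isCompact_Icc Ioo_subset_Icc_self).congr_fun (fun κ _ => ?_)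
    measurableSet_Ioo
  simp only [hbKer, mul_assoc]

lemma setIntegral_pos_of_forall_pos {X : Type*} [MeasurableSpace X] {μ : Measure X}
    {f : X → ℝ} {s : Set X} (hs : MeasurableSet s) (hμs : μ s ≠ 0) (hf : IntegrableOn f s μ)
    (hpos : ∀ x ∈ s, 0 < f x) : 0 < ∫ x in s, f x ∂μ := by
  have hsupp : Function.support f ∩ s = s := inter_eq_right.2 fun x hx => (hpos x hx).ne'
  rw [setIntegral_pos_iff_support_of_nonneg_ae
    (ae_restrict_of_forall_mem hs fun x hx => (hpos x hx).le) hf, hsupp]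
  exact pos_iff_ne_zero.2 hμs

lemma hbC_pos {a b : ℝ} (s : ℝ) {τ : ℝ} (ha : 0 < a) (hb : 0 < b) (hτ : τ ≠ 0) :
    0 < hbC a b τ s :=
  setIntegral_pos_of_forall_pos measurableSet_Ioo (by simp) (integrableOn_hbKer s ha hb hτ)
    fun _ hκ => hbKer_pos a b s hτ hκ

lemma normPdf_mul_hbKer (a b τ s y : ℝ) {σ κ : ℝ} (hσ : σ ≠ 0) (hκ : 0 < κ) :
    normPdf y 0 (σ ^ 2 / κ) * hbKer a b τ s κ =
      (2 * Real.pi * σ ^ 2) ^ (-(1 : ℝ) / 2) *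
        hbKer (a + 1 / 2) b τ (s + y ^ 2 / (2 * σ ^ 2)) κ := by
  have hvar : (2 * Real.pi * (σ ^ 2 / κ)) ^ (-(1 : ℝ) / 2) =
      (2 * Real.pi * σ ^ 2) ^ (-(1 : ℝ) / 2) * κ ^ ((1 : ℝ) / 2) := by
    rw [mul_div_assoc', Real.div_rpow (by positivity) hκ.le, div_eq_mul_inv,
      ← Real.rpow_neg hκ.le]
    norm_num
  have hpow : κ ^ ((1 : ℝ) / 2) * κ ^ (a - 1) = κ ^ (a + 1 / 2 - 1) := by
    rw [← Real.rpow_add hκ]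
    congr 1
    ring
  have hexp : Real.exp (-((y - 0) ^ 2) / (2 * (σ ^ 2 / κ))) * Real.exp (-(s * κ)) =
      Real.exp (-((s + y ^ 2 / (2 * σ ^ 2)) * κ)) := by
    rw [← Real.exp_add]
    congr 1
    field_simp
    ring
  simp only [normPdf, hbKer, hvar, ← hpow, ← hexp]
  ring

lemma div_setIntegral_eq_of_eq_const_mul {X : Type*} [MeasurableSpace X] {μ : Measure X}
    {f g : X → ℝ} {s : Set X} (hs : MeasurableSet s) {c : ℝ} (hc : c ≠ 0)
    (hfg : ∀ x ∈ s, f x = c * g x) {x : X} (hx : x ∈ s) :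
    f x / ∫ u in s, f u ∂μ = g x / ∫ u in s, g u ∂μ := by
  rw [setIntegral_congr_fun hs hfg, integral_const_mul, hfg x hx, mul_div_mul_left _ _ hc]

theorem hb_conjugacy (a b τ s σ y : ℝ) (ha : 0 < a) (hb : 0 < b) (hτ : 0 < τ)
    (hσ : 0 < σ) :
    ∀ κ ∈ Set.Ioo (0 : ℝ) 1,
      normPdf y 0 (σ ^ 2 / κ) * hbPdf a b τ s κ /
          (∫ u in Set.Ioo (0 : ℝ) 1, normPdf y 0 (σ ^ 2 / u) * hbPdf a b τ s u) =
        hbPdf (a + 1 / 2) b τ (s + y ^ 2 / (2 * σ ^ 2)) κ := by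
  intro κ hκ
  have hlik : ∀ u ∈ Ioo (0 : ℝ) 1, normPdf y 0 (σ ^ 2 / u) * hbPdf a b τ s u =
      ((hbC a b τ s)⁻¹ * (2 * Real.pi * σ ^ 2) ^ (-(1 : ℝ) / 2)) *
        hbKer (a + 1 / 2) b τ (s + y ^ 2 / (2 * σ ^ 2)) u := fun u hu => by
    rw [hbPdf, mul_left_comm, normPdf_mul_hbKer a b τ s y hσ.ne' hu.1, ← mul_assoc]
  have hconst : (hbC a b τ s)⁻¹ * (2 * Real.pi * σ ^ 2) ^ (-(1 : ℝ) / 2) ≠ 0 :=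
    mul_ne_zero (inv_ne_zero (hbC_pos s ha hb hτ.ne').ne')
      (Real.rpow_pos_of_pos (by positivity) _).ne'
  rw [div_setIntegral_eq_of_eq_const_mul measurableSet_Ioo hconst hlik hκ, hbPdf, hbC,
    div_eq_inv_mul]
end
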